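/- Let v ≥ 2 and k ≥ 0 be integers and let u be a proper divisor of v (u divides v and u < v). Set d + 1 = (v + u − 1)(k+1), and let Λ be the cyclic subgroup of (ℝ/ℤ)^{d+1} generated by the element whose first (v−1)(k+1) coordinates all equal u/v and whose last u(k+1) coordinates all equal 1/v. Then Λ has δ-polynomial 1 + t^{k+1} + t^{2(k+1)} + ⋯ + t^{(v−1)(k+1)}. -/

import Mathlib

/-! Write `v = u * m`. The generator `g` has coordinates `1/m` and `1/v`, so `v` kills it and
`Λ = {n • g : n < v}`. For `n = q * m + r` with `q < u`, `r < m`, the coordinates of `n • g`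
have fractional parts `r/m` and `n/v`, and summing them gives `ht (n • g) = (q + u * r) * (k + 1)`.
The digit swap `q * m + r ↦ q + u * r` permutes `{0, …, v - 1}`, so every height `j * (k + 1)`
with `j < v` is attained exactly once. -/

open scoped BigOperators

local instance : Fact ((0:ℝ) < 1) := ⟨one_pos⟩

noncomputable def fracR (x : AddCircle (1:ℝ)) : ℝ :=
  ((AddCircle.equivIco 1 0) x : ℝ)

noncomputable def ht {ι : Type*} [Fintype ι] (x : ι → AddCircle (1:ℝ)) : ℝ :=
  ∑ i, fracR (x i)

/-- `Λ` has δ-polynomial `1 + t^step + t^(2*step) + ⋯ + t^((v-1)*step)` :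
the height map is a bijection from `Λ` onto `{j*step : 0 ≤ j ≤ v-1}`. -/
def HasDeltaPoly {ι : Type*} [Fintype ι] (v step : ℕ)
    (Λ : Set (ι → AddCircle (1:ℝ))) : Prop :=
  Set.BijOn ht Λ {y : ℝ | ∃ j : ℕ, j < v ∧ y = (j : ℝ) * (step : ℝ)}

def NonPyramidal {ι : Type*} [Fintype ι] (Λ : Set (ι → AddCircle (1:ℝ))) : Prop :=
  ∀ i : ι, ∃ x ∈ Λ, x i ≠ 0

def digitSwap (u m n : ℕ) : ℕ := n / m + u * (n % m)

lemma digitSwap_lt {u m n : ℕ} (hn : n < u * m) : digitSwap u m n < u * m := by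
  have hm : 0 < m := Nat.pos_of_ne_zero (by rintro rfl; simp at hn)
  have hq : n / m < u := Nat.div_lt_of_lt_mul (by rwa [mul_comm])
  have hr : n % m < m := Nat.mod_lt n hm
  unfold digitSwap
  nlinarith

lemma digitSwap_digitSwap {u m n : ℕ} (hn : n < u * m) :
    digitSwap m u (digitSwap u m n) = n := by
  have hq : n / m < u := Nat.div_lt_of_lt_mul (by rwa [mul_comm])
  have hu : 0 < u := Nat.zero_lt_of_lt hq
  unfold digitSwap
  rw [Nat.add_mul_div_left _ _ hu, Nat.div_eq_of_lt hq, Nat.add_mul_mod_self_left,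
    Nat.mod_eq_of_lt hq, zero_add, Nat.mod_add_div]

lemma bijOn_digitSwap (u m : ℕ) :
    Set.BijOn (digitSwap u m) (Set.Iio (u * m)) (Set.Iio (u * m)) :=
  Set.InvOn.bijOn
    ⟨fun _ hn => digitSwap_digitSwap hn, fun _ hn => digitSwap_digitSwap (by rwa [mul_comm])⟩
    (fun _ hn => digitSwap_lt hn)
    (fun _ hn => by rw [mul_comm]; exact digitSwap_lt (by rwa [mul_comm]))

lemma AddSubgroup.coe_zmultiples_eq_image_Iio {G : Type*} [AddGroup G] {g : G} {v : ℕ}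
    (hv : 0 < v) (hg : v • g = 0) :
    (AddSubgroup.zmultiples g : Set G) = (· • g) '' Set.Iio v := by
  ext x
  constructor
  · rintro ⟨z, rfl⟩
    have h0 : 0 ≤ z % v := Int.emod_nonneg z (by omega)
    have hlt : z % v < v := Int.emod_lt_of_pos z (by omega)
    refine ⟨(z % v).toNat, by simp only [Set.mem_Iio]; omega, ?_⟩
    dsimp only
    rw [← natCast_zsmul, Int.toNat_of_nonneg h0]
    conv_rhs => rw [← Int.emod_add_mul_ediv z v]
    rw [add_zsmul, mul_zsmul', natCast_zsmul, hg, zsmul_zero, add_zero]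
  · rintro ⟨n, -, rfl⟩
    exact AddSubgroup.nsmul_mem _ (AddSubgroup.mem_zmultiples g) n

lemma fracR_coe (x : ℝ) : fracR (x : AddCircle (1 : ℝ)) = Int.fract x := by
  rw [fracR, show (x : AddCircle (1 : ℝ)) = QuotientAddGroup.mk x from rfl,
    AddCircle.coe_equivIco_mk_apply]
  simp

lemma Fin.sum_ite_lt {M : Type*} [AddCommMonoid M] {N A : ℕ} (hA : A ≤ N) (a b : M) :
    ∑ i : Fin N, (if (i : ℕ) < A then a else b) = A • a + (N - A) • b := by
  have hlt : (Finset.range N).filter (· < A) = Finset.range A := by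
    ext; simp only [Finset.mem_filter, Finset.mem_range]; omega
  have hge : (Finset.range N).filter (¬ · < A) = Finset.Ico A N := by
    ext; simp only [Finset.mem_filter, Finset.mem_range, Finset.mem_Ico]; omega
  rw [Fin.sum_univ_eq_sum_range (fun i => if i < A then a else b), Finset.sum_ite, hlt, hge,
    Finset.sum_const, Finset.sum_const, Finset.card_range, Nat.card_Ico]

noncomputable def deltaGenerator (v u k : ℕ) :
    Fin ((v + u - 1) * (k + 1)) → AddCircle (1 : ℝ) :=
  fun i => if (i : ℕ) < (v - 1) * (k + 1) then ((u / v : ℝ) : AddCircle (1 : ℝ))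
    else ((1 / v : ℝ) : AddCircle (1 : ℝ))

lemma nsmul_deltaGenerator_self (v u k : ℕ) : v • deltaGenerator v u k = 0 := by
  funext i
  rcases eq_or_ne v 0 with rfl | hv
  · simp
  have key : ∀ a : ℕ, v • ((a / v : ℝ) : AddCircle (1 : ℝ)) = 0 := fun a => by
    rw [← AddCircle.coe_nsmul, nsmul_eq_mul, mul_div_cancel₀ _ (by exact_mod_cast hv)]
    exact (AddCircle.coe_eq_zero_iff (1 : ℝ)).2 ⟨a, by simp⟩
  simp only [Pi.smul_apply, Pi.zero_apply, deltaGenerator]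
  split_ifs
  · exact key u
  · simpa using key 1

lemma ht_nsmul_deltaGenerator {v : ℕ} (hv : 0 < v) (u k n : ℕ) :
    ht (n • deltaGenerator v u k) = ((v - 1) * (k + 1) : ℕ) * Int.fract (n * u / v : ℝ)
      + (u * (k + 1) : ℕ) * Int.fract (n / v : ℝ) := by
  have hcoord : ∀ i, fracR ((n • deltaGenerator v u k) i) =
      if (i : ℕ) < (v - 1) * (k + 1) then Int.fract (n * u / v : ℝ)
      else Int.fract (n / v : ℝ) := fun i => by
    simp only [Pi.smul_apply, deltaGenerator]
    split_ifs <;>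
      simp only [← AddCircle.coe_nsmul, fracR_coe, nsmul_eq_mul, mul_div_assoc', mul_one]
  rw [ht, Finset.sum_congr rfl fun i _ => hcoord i, Fin.sum_ite_lt (by gcongr; omega),
    nsmul_eq_mul, nsmul_eq_mul, ← Nat.sub_mul]
  congr 4
  omega

lemma ht_nsmul_deltaGenerator_mul {u m n : ℕ} (hn : n < u * m) (k : ℕ) :
    ht (n • deltaGenerator (u * m) u k) = (digitSwap u m n : ℝ) * (k + 1 : ℕ) := by
  have hm : 0 < m := Nat.pos_of_ne_zero (by rintro rfl; simp at hn)
  have hu : 0 < u := Nat.pos_of_ne_zero (by rintro rfl; simp at hn)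
  have hfract₁ : Int.fract (n * u / (u * m : ℕ) : ℝ) = (n % m : ℕ) / m := by
    rw [Nat.cast_mul, mul_comm (u : ℝ), mul_div_mul_right _ _ (by positivity),
      Int.fract_div_natCast_eq_div_natCast_mod]
  have hfract₂ : Int.fract (n / (u * m : ℕ) : ℝ) = n / (u * m : ℕ) :=
    Int.fract_eq_self.2 ⟨by positivity, (div_lt_one (by positivity)).2 (by exact_mod_cast hn)⟩
  have hdiv : (n : ℝ) = m * (n / m : ℕ) + (n % m : ℕ) := by
    exact_mod_cast (Nat.div_add_mod n m).symm
  rw [ht_nsmul_deltaGenerator (by positivity), hfract₁, hfract₂, digitSwap]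
  push_cast [Nat.one_le_iff_ne_zero.2 (Nat.mul_pos hu hm).ne']
  field_simp
  rw [hdiv]
  ring

theorem stmt_4_general (v u k : ℕ) (hv : 2 ≤ v) (hu : u ∣ v) :
    HasDeltaPoly v (k+1)
      ((AddSubgroup.zmultiples
        (fun i : Fin ((v + u - 1)*(k+1)) =>
          if (i : ℕ) < (v-1)*(k+1) then (((u : ℝ) / (v:ℝ) : ℝ) : AddCircle (1:ℝ))
          else ((1 / (v:ℝ) : ℝ) : AddCircle (1:ℝ)))) :
        Set (Fin ((v + u - 1)*(k+1)) → AddCircle (1:ℝ))) := by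
  obtain ⟨m, rfl⟩ := hu
  change HasDeltaPoly _ _ (SetLike.coe (AddSubgroup.zmultiples (deltaGenerator (u * m) u k)))
  rw [HasDeltaPoly, AddSubgroup.coe_zmultiples_eq_image_Iio (by omega)
    (nsmul_deltaGenerator_self _ u k)]
  have htarget : {y : ℝ | ∃ j : ℕ, j < u * m ∧ y = j * (k + 1 : ℕ)}
      = (fun j : ℕ => (j : ℝ) * (k + 1 : ℕ)) '' Set.Iio (u * m) := by
    ext; simp [eq_comm]
  have hscale : Set.InjOn (fun j : ℕ => (j : ℝ) * (k + 1 : ℕ)) (Set.Iio (u * m)) :=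
    fun _ _ _ _ h => by exact_mod_cast mul_right_cancel₀ (by positivity) h
  have hbij : Set.BijOn (ht ∘ (· • deltaGenerator (u * m) u k)) (Set.Iio (u * m))
      ((fun j : ℕ => (j : ℝ) * (k + 1 : ℕ)) '' Set.Iio (u * m)) :=
    (hscale.bijOn_image.comp (bijOn_digitSwap u m)).congr
      fun _ hn => (ht_nsmul_deltaGenerator_mul hn k).symm
  rw [htarget]
  exact (Set.bijOn_comp_iff hbij.injOn.of_comp).1 hbij

theorem stmt_4 (v u k : ℕ) (hv : 2 ≤ v) (hu : u ∣ v) (huv : u < v) :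
    HasDeltaPoly v (k+1)
      ((AddSubgroup.zmultiples
        (fun i : Fin ((v + u - 1)*(k+1)) =>
          if (i : ℕ) < (v-1)*(k+1) then (((u : ℝ) / (v:ℝ) : ℝ) : AddCircle (1:ℝ))
          else ((1 / (v:ℝ) : ℝ) : AddCircle (1:ℝ)))) :
        Set (Fin ((v + u - 1)*(k+1)) → AddCircle (1:ℝ))) :=
  stmt_4_general v u k hv hu
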